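/- B is invertible if and only if every vertex of G has degree at least 2. Moreover, when every vertex has degree at least 2, the matrix M indexed by darts with entries M[(k→l),(i→j)] = (δ_{il}/(d_l − 1))·(1 − δ_{kj}·(d_l − 1)) satisfies M·B = I and B·M = I, i.e. M = B⁻¹. -/

import Mathlib

/-!
Write `T` and `H` for the dart-by-vertex incidence matrices of tails and heads, `J` for the
permutation matrix of dart reversal and `D = diag(d_{head} - 1)`. Then `B = T Hᵀ - J` and
`M = D⁻¹ (H Tᵀ - D J)`, and the identities `Tᵀ T = diag(d)`, `J T = H`, `Tᵀ J = Hᵀ`, `J² = 1`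
give `(H Tᵀ - D J) B = D`. So `M B = 1` as soon as no vertex has degree one. Conversely, if a
vertex `v` has a single neighbour `u`, the row of `B` at the dart `v → u` vanishes.
-/

open Matrix Polynomial BigOperators

variable {V : Type*}

/-- The non-backtracking matrix of a graph `G`, indexed by darts (oriented edges):
`B[(k→l),(i→j)] = 1` if `j = k` and `i ≠ l`, else `0`. -/
def nbMatrix [DecidableEq V] (G : SimpleGraph V) : Matrix G.Dart G.Dart ℂ :=
  fun e f => if f.snd = e.fst ∧ f.fst ≠ e.snd then 1 else 0

/-- The claimed inverse of the non-backtracking matrix: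
`M[(k→l),(i→j)] = (δ_{il}/(d_l − 1))·(1 − δ_{kj}·(d_l − 1))`. -/
noncomputable def nbInvMatrix [DecidableEq V] [Fintype V] (G : SimpleGraph V)
    [DecidableRel G.Adj] : Matrix G.Dart G.Dart ℂ :=
  fun e f => ((if f.fst = e.snd then (1 : ℂ) else 0) / ((G.degree e.snd : ℂ) - 1)) *
    (1 - (if e.fst = f.snd then (1 : ℂ) else 0) * ((G.degree e.snd : ℂ) - 1))

namespace SimpleGraph

variable {G : SimpleGraph V}

theorem Dart.symm_eq_iff {d e : G.Dart} : d.symm = e ↔ e.fst = d.snd ∧ e.snd = d.fst := by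
  rw [Dart.ext_iff, Prod.ext_iff]
  simp [eq_comm]

variable (G) [DecidableEq V] (R : Type*)

def dartFstMatrix [Zero R] [One R] : Matrix G.Dart V R :=
  Matrix.of fun e v => if e.fst = v then 1 else 0

def dartSndMatrix [Zero R] [One R] : Matrix G.Dart V R :=
  Matrix.of fun e v => if e.snd = v then 1 else 0

def dartSymmMatrix [Zero R] [One R] : Matrix G.Dart G.Dart R :=
  Matrix.of fun e f => if e.symm = f then 1 else 0

variable [Fintype V] [NonAssocSemiring R]

theorem dartFstMatrix_mul_dartSndMatrix_transpose_apply (e f : G.Dart) :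
    (G.dartFstMatrix R * (G.dartSndMatrix R)ᵀ) e f = if e.fst = f.snd then 1 else 0 := by
  simp [dartFstMatrix, dartSndMatrix, mul_apply]

theorem dartSndMatrix_mul_dartFstMatrix_transpose_apply (e f : G.Dart) :
    (G.dartSndMatrix R * (G.dartFstMatrix R)ᵀ) e f = if e.snd = f.fst then 1 else 0 := by
  simp [dartFstMatrix, dartSndMatrix, mul_apply]

theorem nbMatrix_eq_sub :
    nbMatrix G = G.dartFstMatrix ℂ * (G.dartSndMatrix ℂ)ᵀ - G.dartSymmMatrix ℂ := by
  ext e f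
  simp only [Matrix.sub_apply, dartFstMatrix_mul_dartSndMatrix_transpose_apply, dartSymmMatrix,
    of_apply, Dart.symm_eq_iff, nbMatrix]
  split_ifs <;> grind

variable [DecidableRel G.Adj]

theorem dartFstMatrix_transpose_mul_self :
    (G.dartFstMatrix R)ᵀ * G.dartFstMatrix R = diagonal fun v => (G.degree v : R) := by
  ext v w
  simp only [dartFstMatrix, transpose_apply, mul_apply, of_apply, ite_mul, one_mul, zero_mul]
  rw [← Finset.sum_filter, diagonal_apply]
  split_ifs with hvw
  · subst hvw
    simp [Finset.filter_filter, ← G.dart_fst_fiber_card_eq_degree]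
  · refine Finset.sum_eq_zero fun e he => ?_
    rw [(Finset.mem_filter.mp he).2]
    exact if_neg hvw

theorem dartSndMatrix_mul_diagonal (d : V → R) :
    G.dartSndMatrix R * diagonal d = diagonal (fun e : G.Dart => d e.snd) * G.dartSndMatrix R := by
  ext e v
  rw [mul_diagonal, diagonal_mul]
  by_cases h : e.snd = v <;> simp [dartSndMatrix, h]

variable {G R}

theorem dartSymmMatrix_mul {ι : Type*} (A : Matrix G.Dart ι R) :
    G.dartSymmMatrix R * A = A.submatrix Dart.symm id := by
  ext e i
  simp [dartSymmMatrix, mul_apply, ite_mul]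

theorem mul_dartSymmMatrix {ι : Type*} (A : Matrix ι G.Dart R) :
    A * G.dartSymmMatrix R = A.submatrix id Dart.symm := by
  ext i f
  simp [dartSymmMatrix, mul_apply, Dart.symm_involutive.eq_iff]

variable (G R)

theorem dartSymmMatrix_mul_dartFstMatrix :
    G.dartSymmMatrix R * G.dartFstMatrix R = G.dartSndMatrix R := by
  rw [dartSymmMatrix_mul]
  rfl

theorem dartFstMatrix_transpose_mul_dartSymmMatrix :
    (G.dartFstMatrix R)ᵀ * G.dartSymmMatrix R = (G.dartSndMatrix R)ᵀ := by
  rw [mul_dartSymmMatrix]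
  rfl

theorem dartSymmMatrix_mul_self : G.dartSymmMatrix R * G.dartSymmMatrix R = 1 := by
  rw [dartSymmMatrix_mul]
  ext e f
  simp [dartSymmMatrix, one_apply]

theorem nbMatrix_apply_eq_zero_of_degree_fst_eq_one {e : G.Dart} (he : G.degree e.fst = 1)
    (f : G.Dart) : nbMatrix G e f = 0 := by
  refine if_neg fun ⟨hf, hne⟩ => hne ?_
  rw [← card_neighborFinset_eq_degree] at he
  exact Finset.card_le_one.mp he.le _ (by simpa [← hf] using f.adj.symm) _ (by simp [e.adj])

noncomputable def nbScaledInvMatrix : Matrix G.Dart G.Dart ℂ :=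
  G.dartSndMatrix ℂ * (G.dartFstMatrix ℂ)ᵀ -
    diagonal (fun e : G.Dart => (G.degree e.snd : ℂ) - 1) * G.dartSymmMatrix ℂ

-- Holds also where `d_l = 1`: there `x / 0 = 0` and `0⁻¹ = 0` make both sides vanish.
theorem nbInvMatrix_eq_diagonal_mul :
    nbInvMatrix G =
      diagonal (fun e : G.Dart => ((G.degree e.snd : ℂ) - 1)⁻¹) * G.nbScaledInvMatrix := by
  ext e f
  simp only [diagonal_mul, nbScaledInvMatrix, Matrix.sub_apply,
    dartSndMatrix_mul_dartFstMatrix_transpose_apply, dartSymmMatrix, of_apply, Dart.symm_eq_iff,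
    nbInvMatrix]
  split_ifs <;> grind

theorem nbScaledInvMatrix_mul_nbMatrix :
    G.nbScaledInvMatrix * nbMatrix G = diagonal (fun e : G.Dart => (G.degree e.snd : ℂ) - 1) := by
  set D := diagonal (fun e : G.Dart => (G.degree e.snd : ℂ) - 1)
  set T := G.dartFstMatrix ℂ
  set H := G.dartSndMatrix ℂ
  set J := G.dartSymmMatrix ℂ
  have hD : diagonal (fun e : G.Dart => (G.degree e.snd : ℂ)) = D + 1 := by
    rw [← diagonal_one, diagonal_add]
    simp
  calc G.nbScaledInvMatrix * nbMatrix G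
      = H * (Tᵀ * T) * Hᵀ - H * (Tᵀ * J) - D * (J * T) * Hᵀ + D * (J * J) := by
        simp only [nbScaledInvMatrix, nbMatrix_eq_sub, Matrix.mul_sub, Matrix.sub_mul,
          Matrix.mul_assoc]
        abel
    _ = (D + 1) * (H * Hᵀ) - H * Hᵀ - D * (H * Hᵀ) + D := by
        rw [dartFstMatrix_transpose_mul_self, dartSndMatrix_mul_diagonal, hD,
          dartFstMatrix_transpose_mul_dartSymmMatrix, dartSymmMatrix_mul_dartFstMatrix,
          dartSymmMatrix_mul_self, Matrix.mul_one, Matrix.mul_assoc, Matrix.mul_assoc]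
    _ = D := by
        rw [Matrix.add_mul, Matrix.one_mul]
        abel

theorem nbInvMatrix_mul_nbMatrix (h : ∀ v, G.degree v ≠ 1) : nbInvMatrix G * nbMatrix G = 1 := by
  rw [nbInvMatrix_eq_diagonal_mul, Matrix.mul_assoc, nbScaledInvMatrix_mul_nbMatrix,
    diagonal_mul_diagonal, ← diagonal_one]
  congr with e
  exact inv_mul_cancel₀ (sub_ne_zero.mpr (by exact_mod_cast h e.snd))

theorem isUnit_nbMatrix_iff : IsUnit (nbMatrix G) ↔ ∀ v, G.degree v ≠ 1 := by
  refine ⟨fun hB v hv => ?_, fun h => ?_⟩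
  · obtain ⟨u, hvu⟩ := (G.degree_pos_iff_exists_adj v).mp (by omega)
    have hrow := G.nbMatrix_apply_eq_zero_of_degree_fst_eq_one (e := ⟨(v, u), hvu⟩) hv
    have hdet := (isUnit_iff_isUnit_det _).mp hB
    rw [det_eq_zero_of_row_eq_zero _ hrow] at hdet
    exact not_isUnit_zero hdet
  · exact (isUnit_iff_isUnit_det _).mpr (isUnit_det_of_left_inverse (G.nbInvMatrix_mul_nbMatrix h))

end SimpleGraph

theorem nbMatrix_isUnit_iff_minDegree_two
    [DecidableEq V] [Fintype V] (G : SimpleGraph V) [DecidableRel G.Adj]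
    (hconn : G.Connected) (hn : 2 ≤ Fintype.card V) :
    (IsUnit (nbMatrix G) ↔ ∀ v : V, 2 ≤ G.degree v) ∧
    ((∀ v : V, 2 ≤ G.degree v) →
      nbInvMatrix G * nbMatrix G = 1 ∧ nbMatrix G * nbInvMatrix G = 1 ∧
      nbInvMatrix G = (nbMatrix G)⁻¹) := by
  have : Nontrivial V := Fintype.one_lt_card_iff_nontrivial.mp hn
  have hiff : (∀ v, G.degree v ≠ 1) ↔ ∀ v, 2 ≤ G.degree v :=
    forall_congr' fun v => by
      have := hconn.preconnected.degree_pos_of_nontrivial v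
      omega
  refine ⟨G.isUnit_nbMatrix_iff.trans hiff, fun h => ?_⟩
  have hMB := G.nbInvMatrix_mul_nbMatrix (hiff.mpr h)
  exact ⟨hMB, mul_eq_one_comm.mp hMB, (inv_eq_left_inv hMB).symm⟩
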